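/- arXiv:1608.00715 — 2 statements merged into one kernel-verified Lean document; each statement's English description precedes it below -/
import Mathlib

section
/- Let n ≥ 1 and let μ be a weak composition of n. Then the interval [0̂, ([n],μ)] of B_n^w has exactly one maximal chain whose label word is strictly increasing in the product order on [n]×{1,2,…}, namely the chain c(σ₀,c₀) where σ₀ is the identity permutation and c₀(1) ≤ c₀(2) ≤ ⋯ ≤ c₀(n) is the unique weakly increasing color sequence of content μ; moreover the label word of this chain lexicographically precedes the label word of every other maximal chain of the interval. -/
/-!
STATEMENT 8: the interval [0̂, ([n],μ)] of B_n^w has a unique maximal chain with strictly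
increasing label word (in the product order on [n] × colors), namely c(σ₀,c₀) with σ₀ = id
and c₀ the weakly increasing color sequence of content μ; moreover its label word
lexicographically precedes the label word of every other maximal chain of the interval.

Weak compositions are modeled as multisets of colors (color j appearing μ(j) times);
e_r corresponds to {r}.  Chains are lists from bottom to top, maximal chains of [x,y]
are cover-chains from x to y, and the label of the cover step (A,ν) ⋖ (A∪{x},ν+e_i) is
(x,i) (recovered below as (∑ of the singleton B∖A, sum of the singleton multiset ξ−ν)).
-/

/-- The weighted boolean algebra `B_n^w`. -/
@[ext] structure WSub (n : ℕ) where
  carrier : Finset (Fin n)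
  wt : Multiset ℕ
  card_eq : Multiset.card wt = carrier.card

instance {n : ℕ} : PartialOrder (WSub n) where
  le p q := p.carrier ⊆ q.carrier ∧ p.wt ≤ q.wt
  le_refl p := ⟨subset_rfl, le_rfl⟩
  le_trans a b c hab hbc := ⟨hab.1.trans hbc.1, hab.2.trans hbc.2⟩
  le_antisymm a b hab hba :=
    WSub.ext (Finset.Subset.antisymm hab.1 hba.1) (le_antisymm hab.2 hba.2)

/-- The label of the covering step `p ⋖ q`: (new letter, new color). -/
def lab {n : ℕ} (p q : WSub n) : ℕ × ℕ :=
  (∑ x ∈ q.carrier \ p.carrier, (x : ℕ), (q.wt - p.wt).sum)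

/-- The label word of a chain (listed bottom to top). -/
def labelWord {n : ℕ} (c : List (WSub n)) : List (ℕ × ℕ) :=
  List.zipWith lab c c.tail

/-- `u` lexicographically precedes `v`: at the first index where they differ, the label
of `u` is strictly smaller (in the product order) than that of `v`. -/
def LexPrec {α : Type*} [PartialOrder α] : List α → List α → Prop
  | a :: u, b :: v => (a = b ∧ LexPrec u v) ∨ (a ≠ b ∧ a < b)
  | _, _ => False

def chainElt {n : ℕ} (σ : Equiv.Perm (Fin n)) (c : Fin n → ℕ) (i : ℕ) : WSub n :=
  ⟨(Finset.univ.filter (fun p : Fin n => (p : ℕ) < i)).image σ,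
   (Finset.univ.filter (fun p : Fin n => (p : ℕ) < i)).val.map (fun p => c (σ p)),
   by rw [Multiset.card_map, Finset.card_image_of_injective _ σ.injective]; rfl⟩

/-- The maximal chain `c(σ,c)` associated with a colored permutation `(σ,c)`. -/
def chainOf {n : ℕ} (σ : Equiv.Perm (Fin n)) (c : Fin n → ℕ) : List (WSub n) :=
  (List.range (n + 1)).map (chainElt σ c)

def IsMaxChain' {α : Type*} [PartialOrder α] (x y : α) (c : List α) : Prop :=
  c.Chain' (· ⋖ ·) ∧ c.head? = some x ∧ c.getLast? = some y

def content {n : ℕ} (c : Fin n → ℕ) : Multiset ℕ := Finset.univ.val.map c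

/-!
Every cover of `B_n^w` adjoins one letter `x` with one color `i`, and is determined by its label
`(x, i)`. Let `P k` be the `k`-th element of the canonical chain (letters `< k`, colors
`c₀ 0, …, c₀ (k-1)`). On any maximal chain from `P k` to the top, the first label is at least
`(k, c₀ k)`: the letters still to come are `≥ k`, and the colors still to come are values of `c₀`
at positions `≥ k`, hence `≥ c₀ k` by monotonicity. Equality forces the next element to be
`P (k + 1)`, which gives lexicographic minimality by induction. If the label word is increasing,
its first label lies below the labels that adjoin the letter `k` and the color `c₀ k` (both occur
somewhere in the word), so equality holds again and the chain is the canonical one.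
-/

section IsMaxChain'

variable {α : Type*} [PartialOrder α] {x y z q : α} {l : List α}

lemma isMaxChain'_iff {c : List α} :
    IsMaxChain' x y c ↔ c.IsChain (· ⋖ ·) ∧ c.head? = some x ∧ c.getLast? = some y := Iff.rfl

@[simp]
lemma isMaxChain'_singleton : IsMaxChain' x y [z] ↔ z = x ∧ z = y := by
  simp [isMaxChain'_iff, eq_comm]

lemma isMaxChain'_cons_cons :
    IsMaxChain' x y (x :: q :: l) ↔ x ⋖ q ∧ IsMaxChain' q y (q :: l) := by
  simp [isMaxChain'_iff, List.isChain_cons_cons, and_assoc]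

lemma IsMaxChain'.le (h : IsMaxChain' x y (x :: l)) : x ≤ y := by
  induction l generalizing x with
  | nil => exact ((isMaxChain'_singleton.1 h).2).le
  | cons q l ih =>
    obtain ⟨hxq, hq⟩ := isMaxChain'_cons_cons.1 h
    exact hxq.le.trans (ih hq)

lemma IsMaxChain'.exists_eq_cons {c : List α} (h : IsMaxChain' x y c) : ∃ l, c = x :: l := by
  obtain _ | ⟨z, l⟩ := c
  · simp [isMaxChain'_iff] at h
  · obtain ⟨-, hz, -⟩ := h
    exact ⟨l, by simpa using hz⟩

end IsMaxChain'

lemma List.IsChain.le_of_mem_cons {α : Type*} [Preorder α] {a b : α} {l : List α}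
    (h : (a :: l).IsChain (· < ·)) (hb : b ∈ a :: l) : a ≤ b := by
  obtain rfl | hb := List.mem_cons.1 hb
  · exact le_rfl
  · exact ((List.pairwise_cons.1 h.pairwise).1 b hb).le

lemma LexPrec.cons_of_le {α : Type*} [PartialOrder α] {a b : α} {u v : List α} (hab : a ≤ b)
    (h : a = b → LexPrec u v) : LexPrec (a :: u) (b :: v) := by
  by_cases heq : a = b
  · exact Or.inl ⟨heq, h heq⟩
  · exact Or.inr ⟨heq, hab.lt_of_ne heq⟩

lemma Multiset.cons_le_iff_mem_sub {α : Type*} [DecidableEq α] {a : α} {s t : Multiset α}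
    (h : s ≤ t) : a ::ₘ s ≤ t ↔ a ∈ t - s := by
  rw [← Multiset.singleton_add, ← le_tsub_iff_right h, Multiset.singleton_le]

namespace WSub

variable {n : ℕ} {p q t : WSub n}

lemma card_carrier_lt_of_lt (h : p < q) : p.carrier.card < q.carrier.card := by
  refine lt_of_not_ge fun hcard => h.ne ?_
  have hcar : p.carrier = q.carrier := Finset.eq_of_subset_of_card_le h.le.1 hcard
  refine WSub.ext hcar (Multiset.eq_of_le_of_card_le h.le.2 ?_)
  rw [p.card_eq, q.card_eq, hcar]

lemma covBy_iff :
    p ⋖ q ↔ ∃ x ∉ p.carrier, ∃ i, q.carrier = insert x p.carrier ∧ q.wt = i ::ₘ p.wt := by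
  constructor
  · intro h
    obtain ⟨x, hxq, hxp⟩ := Finset.exists_of_ssubset <|
      Finset.ssubset_iff_subset_ne.2 ⟨h.le.1, fun he => (card_carrier_lt_of_lt h.lt).ne (he ▸ rfl)⟩
    have hwt : q.wt - p.wt ≠ 0 := fun h0 => (card_carrier_lt_of_lt h.lt).not_ge <| by
      rw [← p.card_eq, ← q.card_eq]
      exact Multiset.card_le_card (tsub_eq_zero_iff_le.1 h0)
    obtain ⟨i, hi⟩ := Multiset.exists_mem_of_ne_zero hwt
    let m : WSub n := ⟨insert x p.carrier, i ::ₘ p.wt, by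
      rw [Multiset.card_cons, p.card_eq, Finset.card_insert_of_notMem hxp]⟩
    have hpm : p ≤ m := ⟨Finset.subset_insert _ _, Multiset.le_cons_self _ _⟩
    have hmq : m ≤ q :=
      ⟨Finset.insert_subset hxq h.le.1, (Multiset.cons_le_iff_mem_sub h.le.2).2 hi⟩
    obtain hmp | hmq := h.eq_or_eq hpm hmq
    · exact absurd (hmp ▸ Finset.mem_insert_self x p.carrier) hxp
    · exact ⟨x, hxp, i, by rw [← hmq], by rw [← hmq]⟩
  · rintro ⟨x, hxp, i, hcar, hwt⟩
    have hlt : p < q := by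
      refine lt_of_le_of_ne ⟨hcar ▸ Finset.subset_insert _ _, hwt ▸ Multiset.le_cons_self _ _⟩ ?_
      rintro rfl
      exact hxp (hcar ▸ Finset.mem_insert_self x p.carrier)
    refine ⟨hlt, fun m hpm hmq => ?_⟩
    have := card_carrier_lt_of_lt hpm
    have := card_carrier_lt_of_lt hmq
    rw [hcar, Finset.card_insert_of_notMem hxp] at this
    omega

lemma labelWord_cons_cons (p q : WSub n) (l : List (WSub n)) :
    labelWord (p :: q :: l) = lab p q :: labelWord (q :: l) := rfl

lemma lab_eq {x : Fin n} {i : ℕ} (hx : x ∉ p.carrier) (hcar : q.carrier = insert x p.carrier)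
    (hwt : q.wt = i ::ₘ p.wt) : lab p q = ((x : ℕ), i) := by
  rw [lab, hcar, hwt, Finset.insert_sdiff_cancel hx, ← Multiset.singleton_add,
    add_tsub_cancel_right]
  simp

lemma eq_of_covBy_of_lab_eq {q' : WSub n} (h : p ⋖ q) (h' : p ⋖ q') (hlab : lab p q = lab p q') :
    q = q' := by
  obtain ⟨x, hx, i, hcar, hwt⟩ := covBy_iff.1 h
  obtain ⟨x', hx', i', hcar', hwt'⟩ := covBy_iff.1 h'
  rw [lab_eq hx hcar hwt, lab_eq hx' hcar' hwt', Prod.mk.injEq, Fin.val_inj] at hlab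
  obtain ⟨rfl, rfl⟩ := hlab
  exact WSub.ext (hcar.trans hcar'.symm) (hwt.trans hwt'.symm)

lemma exists_mem_labelWord_fst_eq {l : List (WSub n)} (h : IsMaxChain' p t (p :: l)) {y : Fin n}
    (hy : y ∈ t.carrier \ p.carrier) : ∃ a ∈ labelWord (p :: l), a.1 = y := by
  induction l generalizing p with
  | nil => simp [(isMaxChain'_singleton.1 h).2] at hy
  | cons q l ih =>
    obtain ⟨hpq, hq⟩ := isMaxChain'_cons_cons.1 h
    obtain ⟨x, hx, i, hcar, hwt⟩ := covBy_iff.1 hpq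
    rw [labelWord_cons_cons, lab_eq hx hcar hwt]
    by_cases hyx : y = x
    · exact ⟨_, List.mem_cons_self, by rw [hyx]⟩
    · obtain ⟨a, ha, hay⟩ := ih hq (by simp_all)
      exact ⟨a, List.mem_cons_of_mem _ ha, hay⟩

lemma exists_mem_labelWord_snd_eq {l : List (WSub n)} (h : IsMaxChain' p t (p :: l)) {j : ℕ}
    (hj : j ∈ t.wt - p.wt) : ∃ a ∈ labelWord (p :: l), a.2 = j := by
  induction l generalizing p with
  | nil => simp [(isMaxChain'_singleton.1 h).2] at hj
  | cons q l ih =>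
    obtain ⟨hpq, hq⟩ := isMaxChain'_cons_cons.1 h
    obtain ⟨x, hx, i, hcar, hwt⟩ := covBy_iff.1 hpq
    rw [labelWord_cons_cons, lab_eq hx hcar hwt]
    by_cases hji : j = i
    · exact ⟨_, List.mem_cons_self, hji.symm⟩
    · rw [Multiset.mem_sub] at hj
      obtain ⟨a, ha, haj⟩ := ih hq (by rwa [Multiset.mem_sub, hwt, Multiset.count_cons_of_ne hji])
      exact ⟨a, List.mem_cons_of_mem _ ha, haj⟩

end WSub

lemma Fin.univ_filter_val_lt_succ {n k : ℕ} (hk : k < n) :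
    (Finset.univ.filter fun p : Fin n => (p : ℕ) < k + 1) =
      insert ⟨k, hk⟩ (Finset.univ.filter fun p : Fin n => (p : ℕ) < k) := by
  ext p
  simp only [Finset.mem_filter, Finset.mem_univ, true_and, Finset.mem_insert, Fin.ext_iff]
  omega

section chainOf

variable {n : ℕ} (σ : Equiv.Perm (Fin n)) (c : Fin n → ℕ) {k : ℕ}

lemma chainElt_zero : chainElt σ c 0 = ⟨∅, 0, by simp⟩ := by
  ext <;> simp [chainElt]

lemma chainElt_last : chainElt σ c n = ⟨Finset.univ, content c, by simp [content]⟩ := by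
  ext1
  · simp [chainElt]
  · simp only [chainElt, Fin.is_lt, Finset.filter_true, content]
    exact (Multiset.map_map c σ _).symm.trans (by rw [Multiset.map_univ_val_equiv])

lemma apply_notMem_chainElt_carrier (hk : k < n) : σ ⟨k, hk⟩ ∉ (chainElt σ c k).carrier := by
  simp [chainElt]

lemma chainElt_succ_carrier (hk : k < n) :
    (chainElt σ c (k + 1)).carrier = insert (σ ⟨k, hk⟩) (chainElt σ c k).carrier := by
  simp only [chainElt, Fin.univ_filter_val_lt_succ hk, Finset.image_insert]

lemma chainElt_succ_wt (hk : k < n) :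
    (chainElt σ c (k + 1)).wt = c (σ ⟨k, hk⟩) ::ₘ (chainElt σ c k).wt := by
  simp only [chainElt, Fin.univ_filter_val_lt_succ hk]
  rw [Finset.insert_val_of_notMem (by simp), Multiset.map_cons]

lemma chainElt_covBy_succ (hk : k < n) : chainElt σ c k ⋖ chainElt σ c (k + 1) :=
  WSub.covBy_iff.2 ⟨_, apply_notMem_chainElt_carrier σ c hk, _,
    chainElt_succ_carrier σ c hk, chainElt_succ_wt σ c hk⟩

lemma lab_chainElt_succ (hk : k < n) :
    lab (chainElt σ c k) (chainElt σ c (k + 1)) = ((σ ⟨k, hk⟩ : ℕ), c (σ ⟨k, hk⟩)) :=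
  WSub.lab_eq (apply_notMem_chainElt_carrier σ c hk) (chainElt_succ_carrier σ c hk)
    (chainElt_succ_wt σ c hk)

lemma isMaxChain'_chainOf : IsMaxChain' (chainElt σ c 0) (chainElt σ c n) (chainOf σ c) := by
  refine isMaxChain'_iff.2 ⟨?_, ?_, ?_⟩
  · rw [chainOf, List.isChain_map, List.isChain_range_succ]
    exact fun k hk => chainElt_covBy_succ σ c hk
  · simp [chainOf, List.range_succ_eq_map]
  · simp [chainOf, List.range_succ]

lemma labelWord_chainOf :
    labelWord (chainOf σ c) = List.ofFn fun k => ((σ k : ℕ), c (σ k)) := by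
  refine List.ext_getElem (by simp [labelWord, chainOf]) fun k hk _ => ?_
  have hkn : k < n := by simpa [labelWord, chainOf] using hk
  simp [labelWord, chainOf, lab_chainElt_succ σ c hkn]

lemma drop_chainOf (hk : k ≤ n) :
    (chainOf σ c).drop k = chainElt σ c k :: (chainOf σ c).drop (k + 1) := by
  rw [List.drop_eq_getElem_cons (by simp [chainOf]; omega)]
  simp [chainOf]

end chainOf

section identity

variable {n : ℕ} {c : Fin n → ℕ} {k : ℕ} {q : WSub n} {l : List (WSub n)}

local notation "P" => chainElt 1 c

lemma mem_chainElt_one_carrier {x : Fin n} : x ∈ (P k).carrier ↔ (x : ℕ) < k := by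
  simp [chainElt]

lemma mem_chainElt_one_last_wt_sub {i : ℕ} :
    i ∈ (P n).wt - (P k).wt ↔ ∃ p : Fin n, k ≤ p ∧ c p = i := by
  have hsplit : (P n).wt = (P k).wt + (Finset.univ.filter fun p : Fin n => k ≤ p).val.map c := by
    simp only [chainElt, Fin.is_lt, Finset.filter_true, Equiv.Perm.coe_one, id, ← not_lt,
      ← Multiset.map_add, Finset.filter_val, Multiset.filter_add_not]
  rw [hsplit, add_tsub_cancel_left]
  simp

lemma lt_of_chainElt_one_covBy (h : P k ⋖ q) : k < n := by
  obtain ⟨x, hx, -⟩ := WSub.covBy_iff.1 h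
  exact (not_lt.1 (mem_chainElt_one_carrier.not.1 hx)).trans_lt x.isLt

lemma eq_of_chainElt_one_eq_last (hk : k ≤ n) (h : P k = P n) : k = n := by
  refine hk.eq_of_not_lt fun hkn => ?_
  have : (⟨k, hkn⟩ : Fin n) ∈ (P k).carrier := by rw [h, mem_chainElt_one_carrier]; exact hkn
  exact (mem_chainElt_one_carrier.1 this).false

lemma lab_chainElt_one_succ_le (hc : Monotone c) (h : P k ⋖ q) (hq : q ≤ P n) :
    lab (P k) (P (k + 1)) ≤ lab (P k) q := by
  have hk := lt_of_chainElt_one_covBy h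
  obtain ⟨x, hx, i, hcar, hwt⟩ := WSub.covBy_iff.1 h
  have hi : i ∈ (P n).wt - (P k).wt :=
    (Multiset.cons_le_iff_mem_sub (h.le.trans hq).2).1 (hwt ▸ hq.2)
  obtain ⟨p, hkp, rfl⟩ := mem_chainElt_one_last_wt_sub.1 hi
  rw [lab_chainElt_succ 1 c hk, WSub.lab_eq hx hcar hwt]
  exact ⟨not_lt.1 (mem_chainElt_one_carrier.not.1 hx), hc (Fin.le_iff_val_le_val.2 hkp)⟩

lemma lab_le_lab_chainElt_one_succ (h : IsMaxChain' (P k) (P n) (P k :: q :: l))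
    (hinc : (labelWord (P k :: q :: l)).IsChain (· < ·)) :
    lab (P k) q ≤ lab (P k) (P (k + 1)) := by
  have hk := lt_of_chainElt_one_covBy (isMaxChain'_cons_cons.1 h).1
  obtain ⟨a, ha, hak⟩ := WSub.exists_mem_labelWord_fst_eq h (y := ⟨k, hk⟩) (by
    simp [mem_chainElt_one_carrier, hk])
  obtain ⟨b, hb, hbk⟩ := WSub.exists_mem_labelWord_snd_eq h (j := c ⟨k, hk⟩)
    (mem_chainElt_one_last_wt_sub.2 ⟨_, le_rfl, rfl⟩)
  rw [WSub.labelWord_cons_cons] at ha hb hinc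
  rw [lab_chainElt_succ 1 c hk]
  exact ⟨hak ▸ (hinc.le_of_mem_cons ha).1, hbk ▸ (hinc.le_of_mem_cons hb).2⟩

lemma singleton_eq_drop_chainOf (hk : k ≤ n) (h : IsMaxChain' (P k) (P n) [P k]) :
    [P k] = (chainOf 1 c).drop k := by
  obtain rfl := eq_of_chainElt_one_eq_last hk (isMaxChain'_singleton.1 h).2
  rw [drop_chainOf 1 c le_rfl, List.drop_eq_nil_of_le (by simp [chainOf])]

lemma labelWord_drop_chainOf (hk : k < n) :
    labelWord ((chainOf 1 c).drop k) =
      lab (P k) (P (k + 1)) :: labelWord ((chainOf 1 c).drop (k + 1)) := by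
  rw [drop_chainOf 1 c hk.le, drop_chainOf 1 c hk, WSub.labelWord_cons_cons,
    ← drop_chainOf 1 c hk]

theorem eq_drop_chainOf_of_isChain_labelWord (hc : Monotone c) (hk : k ≤ n)
    (h : IsMaxChain' (P k) (P n) (P k :: l)) (hinc : (labelWord (P k :: l)).IsChain (· < ·)) :
    P k :: l = (chainOf 1 c).drop k := by
  induction l generalizing k with
  | nil => exact singleton_eq_drop_chainOf hk h
  | cons q l ih =>
    obtain ⟨hkq, hq⟩ := isMaxChain'_cons_cons.1 h
    have hkn := lt_of_chainElt_one_covBy hkq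
    obtain rfl : q = P (k + 1) := WSub.eq_of_covBy_of_lab_eq hkq (chainElt_covBy_succ 1 c hkn)
      ((lab_le_lab_chainElt_one_succ h hinc).antisymm (lab_chainElt_one_succ_le hc hkq hq.le))
    rw [WSub.labelWord_cons_cons] at hinc
    rw [drop_chainOf 1 c hk, ih hkn hq hinc.tail]

theorem lexPrec_labelWord_drop_chainOf (hc : Monotone c) (hk : k ≤ n)
    (h : IsMaxChain' (P k) (P n) (P k :: l)) (hne : P k :: l ≠ (chainOf 1 c).drop k) :
    LexPrec (labelWord ((chainOf 1 c).drop k)) (labelWord (P k :: l)) := by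
  induction l generalizing k with
  | nil => exact absurd (singleton_eq_drop_chainOf hk h) hne
  | cons q l ih =>
    obtain ⟨hkq, hq⟩ := isMaxChain'_cons_cons.1 h
    have hkn := lt_of_chainElt_one_covBy hkq
    rw [labelWord_drop_chainOf hkn, WSub.labelWord_cons_cons]
    refine LexPrec.cons_of_le (lab_chainElt_one_succ_le hc hkq hq.le) fun hlab => ?_
    obtain rfl := WSub.eq_of_covBy_of_lab_eq (chainElt_covBy_succ 1 c hkn) hkq hlab
    exact ih hkn hq fun he => hne (by rw [drop_chainOf 1 c hk, he])

end identity

theorem unique_increasing_chain_in_maximal_interval (n : ℕ)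
    (μ : Multiset ℕ) (hμ : Multiset.card μ = n)
    (c₀ : Fin n → ℕ) (hmono : Monotone c₀) (hc₀ : content c₀ = μ) :
    (IsMaxChain' (⟨∅, 0, by simp⟩ : WSub n) (⟨Finset.univ, μ, by simp [hμ]⟩ : WSub n)
        (chainOf 1 c₀) ∧
      (labelWord (chainOf 1 c₀)).Chain' (· < ·)) ∧
    (∀ d : List (WSub n),
      IsMaxChain' (⟨∅, 0, by simp⟩ : WSub n) (⟨Finset.univ, μ, by simp [hμ]⟩ : WSub n) d →
      (labelWord d).Chain' (· < ·) → d = chainOf 1 c₀) ∧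
    (∀ d : List (WSub n),
      IsMaxChain' (⟨∅, 0, by simp⟩ : WSub n) (⟨Finset.univ, μ, by simp [hμ]⟩ : WSub n) d →
      d ≠ chainOf 1 c₀ → LexPrec (labelWord (chainOf 1 c₀)) (labelWord d)) := by
  subst hc₀
  rw [← chainElt_zero 1 c₀, ← chainElt_last 1 c₀]
  refine ⟨⟨isMaxChain'_chainOf 1 c₀, ?_⟩, fun d hd hinc => ?_, fun d hd hne => ?_⟩
  · rw [labelWord_chainOf]
    exact List.isChain_ofFn.2 fun k hk => Prod.mk_lt_mk_of_lt_of_le (by simp) (hmono (by simp))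
  all_goals obtain ⟨l, rfl⟩ := hd.exists_eq_cons
  · exact eq_drop_chainOf_of_isChain_labelWord hmono (Nat.zero_le n) hd hinc
  · exact lexPrec_labelWord_drop_chainOf hmono (Nat.zero_le n) hd hne
end

section
/- Fix n ≥ 1 and k ≥ 1, and let P be B_n^{[k]} with a maximum 1̂ adjoined. A maximal chain of P is ascent-free with respect to the labeling λ̄ if and only if it equals c(σ,c) ∪ {1̂} for some ascent-free colored permutation (σ,c) of [n] with colors in [k] satisfying c(σ(n)) ≠ 1. In particular the number of ascent-free maximal chains of P is |{ (σ,c) ∈ Ninc_n^{[k]} : c(σ(n)) ≠ 1 }|. -/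
/-!
Conventions.  Colors {1,…,k} are modeled by `Fin k` (0-indexed, order-isomorphic), so
the condition c(σ(n)) ≠ 1 becomes (c (σ (n-1))).val ≠ 0 (positions are 0-indexed too).
Weak compositions with support in [k] are multisets over `Fin k`; e_i corresponds to {i}.
Labels live in ℕ × ℕ with the product order; a cover (A,ν) ⋖ (A∪{x},ν+e_i) is labeled
(x,i) and covers into ⊤ are labeled (n,0).  Chains are lists bottom to top; a maximal
chain of P runs from the minimum 0̂ = (∅,0) to the maximum ⊤ through covers.  A chain is
ascent-free if no consecutive pair of its labels strictly increases in the product order.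
-/

@[ext] structure WSubK (n k : ℕ) where
  carrier : Finset (Fin n)
  wt : Multiset (Fin k)
  card_eq : Multiset.card wt = carrier.card

instance {n k : ℕ} : PartialOrder (WSubK n k) where
  le p q := p.carrier ⊆ q.carrier ∧ p.wt ≤ q.wt
  le_refl p := ⟨subset_rfl, le_rfl⟩
  le_trans a b c hab hbc := ⟨hab.1.trans hbc.1, hab.2.trans hbc.2⟩
  le_antisymm a b hab hba :=
    WSubK.ext (Finset.Subset.antisymm hab.1 hba.1) (le_antisymm hab.2 hba.2)

def labK {n k : ℕ} (p q : WithTop (WSubK n k)) : ℕ × ℕ :=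
  match p, q with
  | (p : WSubK n k), (q : WSubK n k) =>
      (∑ x ∈ q.carrier \ p.carrier, (x : ℕ), ((q.wt - p.wt).map Fin.val).sum)
  | _, _ => (n, 0)

def labelWordK {n k : ℕ} (c : List (WithTop (WSubK n k))) : List (ℕ × ℕ) :=
  List.zipWith labK c c.tail

def chainEltK {n k : ℕ} (σ : Equiv.Perm (Fin n)) (c : Fin n → Fin k) (i : ℕ) : WSubK n k :=
  ⟨(Finset.univ.filter (fun p : Fin n => (p : ℕ) < i)).image σ,
   (Finset.univ.filter (fun p : Fin n => (p : ℕ) < i)).val.map (fun p => c (σ p)),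
   by rw [Multiset.card_map, Finset.card_image_of_injective _ σ.injective]; rfl⟩

/-- The maximal chain `c(σ,c) ∪ {1̂}` of `B_n^{[k]} ∪ {1̂}` associated with the colored
permutation `(σ,c)`. -/
def hatChainOf {n k : ℕ} (σ : Equiv.Perm (Fin n)) (c : Fin n → Fin k) :
    List (WithTop (WSubK n k)) :=
  ((List.range (n + 1)).map (fun i => ((chainEltK σ c i : WSubK n k) : WithTop (WSubK n k))))
    ++ [⊤]

/-- An ascent of the colored permutation `(σ, c)`. -/
def HasAscent {n : ℕ} {C : Type*} [Preorder C] (σ : Equiv.Perm (Fin n)) (c : Fin n → C) : Prop :=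
  ∃ i : ℕ, ∃ h : i + 1 < n,
    σ ⟨i, Nat.lt_of_succ_lt h⟩ < σ ⟨i + 1, h⟩ ∧
      c (σ ⟨i, Nat.lt_of_succ_lt h⟩) ≤ c (σ ⟨i + 1, h⟩)

/-!
A cover in `B_n^{[k]}` adjoins one new element `x` together with one color `i`, and a
maximal chain of `B_n^{[k]} ∪ {1̂}` must pass through an element with carrier `[n]` before
`1̂`. Recording the order in which the elements are adjoined and their colors shows that the
maximal chains are exactly the chains `c(σ,c) ∪ {1̂}`, with label word
`(σ(1), c(σ(1))), …, (σ(n), c(σ(n))), (n+1, 1)`; in particular `(σ,c)` can be read back from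
the labels. As `σ` is injective, two consecutive labels `(σ(i), c(σ(i))) < (σ(i+1), c(σ(i+1)))`
increase strictly exactly at an ascent of `(σ,c)`, and `(σ(n), c(σ(n))) < (n+1, 1)` holds
exactly when `c(σ(n)) = 1`.
-/

open Finset

namespace WSubK

variable {n k : ℕ}

instance : OrderBot (WSubK n k) where
  bot := ⟨∅, 0, by simp⟩
  bot_le a := ⟨empty_subset _, Multiset.zero_le _⟩

@[simp] lemma carrier_bot : (⊥ : WSubK n k).carrier = ∅ := rfl

@[simp] lemma wt_bot : (⊥ : WSubK n k).wt = 0 := rfl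

def cons (a : WSubK n k) (x : Fin n) (hx : x ∉ a.carrier) (i : Fin k) : WSubK n k :=
  ⟨insert x a.carrier, i ::ₘ a.wt, by
    rw [Multiset.card_cons, a.card_eq, card_insert_of_notMem hx]⟩

@[simp] lemma carrier_cons (a : WSubK n k) (x : Fin n) (hx : x ∉ a.carrier) (i : Fin k) :
    (a.cons x hx i).carrier = insert x a.carrier := rfl

@[simp] lemma wt_cons (a : WSubK n k) (x : Fin n) (hx : x ∉ a.carrier) (i : Fin k) :
    (a.cons x hx i).wt = i ::ₘ a.wt := rfl

lemma le_cons (a : WSubK n k) (x : Fin n) (hx : x ∉ a.carrier) (i : Fin k) :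
    a ≤ a.cons x hx i :=
  ⟨subset_insert _ _, Multiset.le_cons_self _ _⟩

lemma cons_ne (a : WSubK n k) (x : Fin n) (hx : x ∉ a.carrier) (i : Fin k) :
    a.cons x hx i ≠ a :=
  fun h => hx (h ▸ mem_insert_self x a.carrier)

lemma carrier_ssubset_of_lt {a b : WSubK n k} (h : a < b) : a.carrier ⊂ b.carrier := by
  refine ssubset_of_subset_of_ne h.le.1 fun hc => h.ne (WSubK.ext hc ?_)
  exact Multiset.eq_of_le_of_card_le h.le.2 (by rw [a.card_eq, b.card_eq, hc])

lemma covBy_iff {a b : WSubK n k} : a ⋖ b ↔ ∃ x hx i, b = a.cons x hx i := by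
  constructor
  · intro h
    obtain ⟨x, hxb, hxa⟩ := exists_of_ssubset (carrier_ssubset_of_lt h.lt)
    have hwt : a.wt < b.wt := h.le.2.lt_of_ne fun hw => by
      have := card_lt_card (carrier_ssubset_of_lt h.lt)
      rw [← a.card_eq, ← b.card_eq, hw] at this
      exact this.false
    obtain ⟨i, hi⟩ := Multiset.exists_mem_of_ne_zero (tsub_pos_of_lt hwt).ne'
    have hle : a.cons x hxa i ≤ b := by
      refine ⟨insert_subset hxb h.le.1, ?_⟩
      rw [wt_cons, ← Multiset.singleton_add, ← tsub_add_cancel_of_le h.le.2]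
      exact add_le_add_left (Multiset.singleton_le.2 hi) a.wt
    exact ⟨x, hxa, i, ((h.eq_or_eq (le_cons a x hxa i) hle).resolve_left (cons_ne a x hxa i)).symm⟩
  · rintro ⟨x, hx, i, rfl⟩
    refine ⟨(le_cons a x hx i).lt_of_ne (cons_ne a x hx i).symm, fun m ham hmb => ?_⟩
    have h₁ := card_lt_card (carrier_ssubset_of_lt ham)
    have h₂ := card_lt_card (carrier_ssubset_of_lt hmb)
    rw [carrier_cons, card_insert_of_notMem hx] at h₂
    omega

lemma isMax_iff (hk : 0 < k) {a : WSubK n k} : IsMax a ↔ a.carrier = univ := by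
  constructor
  · intro ha
    refine eq_univ_of_forall fun x => by_contra fun hx => ?_
    exact hx ((ha (le_cons a x hx ⟨0, hk⟩)).1 (mem_insert_self x a.carrier))
  · intro ha b hab
    by_contra hba
    exact (carrier_ssubset_of_lt (lt_of_le_not_ge hab hba)).2 (ha ▸ subset_univ _)

end WSubK

section FinFilter

variable {n : ℕ}

lemma filter_val_lt_succ {i : ℕ} (hi : i < n) :
    univ.filter (fun p : Fin n => (p : ℕ) < i + 1) =
      insert ⟨i, hi⟩ (univ.filter fun p : Fin n => (p : ℕ) < i) := by
  ext p
  simp only [mem_filter, mem_univ, true_and, mem_insert, Fin.ext_iff]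
  omega

lemma val_filter_val_lt_succ {i : ℕ} (hi : i < n) :
    (univ.filter fun p : Fin n => (p : ℕ) < i + 1).val =
      ⟨i, hi⟩ ::ₘ (univ.filter fun p : Fin n => (p : ℕ) < i).val := by
  rw [filter_val_lt_succ hi, insert_val, Multiset.ndinsert_of_notMem (by simp)]

end FinFilter

section ColoredPermutation

variable {n k : ℕ} (σ : Equiv.Perm (Fin n)) (c : Fin n → Fin k)

lemma chainEltK_zero : chainEltK σ c 0 = ⊥ :=
  WSubK.ext (by simp [chainEltK]) (by simp [chainEltK])

lemma apply_notMem_carrier_chainEltK {i : ℕ} (hi : i < n) :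
    σ ⟨i, hi⟩ ∉ (chainEltK σ c i).carrier := by
  simp [chainEltK]

lemma chainEltK_succ {i : ℕ} (hi : i < n) :
    chainEltK σ c (i + 1) =
      (chainEltK σ c i).cons (σ ⟨i, hi⟩) (apply_notMem_carrier_chainEltK σ c hi)
        (c (σ ⟨i, hi⟩)) := by
  apply WSubK.ext
  · simp only [chainEltK, WSubK.carrier_cons, filter_val_lt_succ hi, image_insert]
  · simp only [chainEltK, WSubK.wt_cons, val_filter_val_lt_succ hi, Multiset.map_cons]

lemma carrier_chainEltK_self : (chainEltK σ c n).carrier = univ := by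
  simp [chainEltK]

lemma isMaxChain'_chainEltK :
    IsMaxChain' ⊥ (chainEltK σ c n) ((List.range (n + 1)).map (chainEltK σ c)) := by
  refine ⟨(List.isChain_map _).2 ((List.isChain_range_succ _ _).2 fun i hi => ?_), ?_, ?_⟩
  · exact WSubK.covBy_iff.2 ⟨_, _, _, chainEltK_succ σ c hi⟩
  · simp [List.range_succ_eq_map, chainEltK_zero]
  · simp [List.getLast?_range]

lemma hatChainOf_eq :
    hatChainOf σ c = ((List.range (n + 1)).map (chainEltK σ c)).map (↑) ++ [⊤] := by
  rw [List.map_map]; rfl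

end ColoredPermutation

section WithTop

variable {α : Type*} [PartialOrder α]

lemma isMaxChain'_coe_top_iff {a : α} {d : List (WithTop α)} :
    IsMaxChain' (a : WithTop α) ⊤ d ↔
      ∃ l : List α, ∃ t, IsMaxChain' a t l ∧ IsMax t ∧ d = l.map (↑) ++ [⊤] := by
  change d.IsChain _ ∧ _ ↔ ∃ l t, (List.IsChain _ l ∧ _) ∧ _
  constructor
  · induction d generalizing a with
    | nil => simp
    | cons x d ih =>
      rintro ⟨hch, hhd, hlst⟩
      obtain rfl : x = a := by simpa using hhd
      match d, hch, hlst with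
      | [], _, hlst => simp at hlst
      | ⊤ :: [], hch, _ =>
        exact ⟨[a], a, by simp, WithTop.coe_covBy_top.1 (by simpa using hch), rfl⟩
      | ⊤ :: z :: _, hch, _ =>
        simp only [List.isChain_cons_cons] at hch
        exact absurd hch.2.1.lt not_top_lt
      | (b : α) :: d, hch, hlst =>
        rw [List.isChain_cons_cons] at hch
        obtain ⟨l, t, ⟨hlch, hlhd, hllst⟩, ht, hd⟩ :=
          ih ⟨hch.2, rfl, by simpa [List.getLast?_cons_cons] using hlst⟩
        obtain ⟨l, rfl⟩ := List.head?_eq_some_iff.1 hlhd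
        refine ⟨a :: b :: l, t, ⟨?_, rfl, ?_⟩, ht, by rw [hd]; rfl⟩
        · exact List.isChain_cons_cons.2 ⟨WithTop.coe_covBy_coe.1 hch.1, hlch⟩
        · simpa [List.getLast?_cons_cons] using hllst
  · rintro ⟨l, t, ⟨hch, hhd, hlst⟩, ht, rfl⟩
    refine ⟨List.isChain_append.2 ⟨?_, List.isChain_singleton _, ?_⟩, ?_, by simp⟩
    · exact (List.isChain_map _).2 (hch.imp fun _ _ => WithTop.coe_covBy_coe.2)
    · simp only [List.getLast?_map, hlst, List.head?_cons, Option.map_some, Option.mem_def,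
        Option.some.injEq, forall_eq', WithTop.coe_covBy_top, ht]
    · rw [List.head?_append, List.head?_map, hhd]; rfl

end WithTop

namespace WSubK

variable {n k : ℕ}

lemma card_carrier_getElem_of_isChain {l : List (WSubK n k)} (hl : l.IsChain (· ⋖ ·))
    (h0 : l.head? = some ⊥) : ∀ j (hj : j < l.length), l[j].carrier.card = j
  | 0, hj => by
    rw [List.head?_eq_getElem?, List.getElem?_eq_getElem hj, Option.some.injEq] at h0
    simp [h0]
  | j + 1, hj => by
    obtain ⟨x, hx, i, h⟩ := covBy_iff.1 (hl.getElem j hj)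
    rw [h, carrier_cons, card_insert_of_notMem hx,
      card_carrier_getElem_of_isChain hl h0 j (by omega)]

lemma length_eq_of_isMaxChain' (hk : 0 < k) {l : List (WSubK n k)} {t : WSubK n k}
    (hl : IsMaxChain' ⊥ t l) (ht : IsMax t) : l.length = n + 1 := by
  obtain ⟨hch, h0, hlast⟩ := hl
  have hne : l ≠ [] := by rintro rfl; simp at h0
  have hpos : 0 < l.length := List.length_pos_iff.2 hne
  rw [List.getLast?_eq_some_getLast hne, Option.some.injEq, List.getLast_eq_getElem] at hlast
  have := card_carrier_getElem_of_isChain hch h0 (l.length - 1) (by omega)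
  rw [hlast, (isMax_iff hk).1 ht, card_univ, Fintype.card_fin] at this
  omega

lemma exists_eq_map_chainEltK {l : List (WSubK n k)} (hl : l.IsChain (· ⋖ ·))
    (h0 : l.head? = some ⊥) (hlen : l.length = n + 1) :
    ∃ σ c, l = (List.range (n + 1)).map (chainEltK σ c) := by
  have hstep : ∀ j : Fin n, ∃ x, ∃ hx : x ∉ (l[(j : ℕ)]'(by omega)).carrier, ∃ i,
      l[(j : ℕ) + 1]'(by omega) = (l[(j : ℕ)]'(by omega)).cons x hx i :=
    fun j => covBy_iff.1 (hl.getElem j (by omega))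
  choose x hx col hcons using hstep
  have hform : ∀ j (hj : j ≤ n),
      (l[j]'(by omega)).carrier = (univ.filter fun p : Fin n => (p : ℕ) < j).image x ∧
        (l[j]'(by omega)).wt = (univ.filter fun p : Fin n => (p : ℕ) < j).val.map col := by
    intro j hj
    induction j with
    | zero =>
      rw [List.head?_eq_getElem?, List.getElem?_eq_getElem (by omega), Option.some.injEq] at h0
      simp [h0]
    | succ j ih =>
      obtain ⟨ihc, ihw⟩ := ih (by omega)
      rw [hcons ⟨j, by omega⟩, carrier_cons, wt_cons, ihc, ihw, val_filter_val_lt_succ (by omega),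
        Multiset.map_cons, filter_val_lt_succ (by omega), image_insert]
      exact ⟨rfl, rfl⟩
  have hinj : Function.Injective x := Function.Injective.of_lt_imp_ne fun p q hpq hxpq => by
    apply hx q
    rw [(hform q q.isLt.le).1]
    exact mem_image.2 ⟨p, by simpa using hpq, hxpq⟩
  let σ := Equiv.ofBijective x (Finite.injective_iff_bijective.1 hinj)
  refine ⟨σ, col ∘ σ.symm, List.ext_getElem (by simp [hlen]) fun j hj _ => ?_⟩
  obtain ⟨hc, hw⟩ := hform j (by omega)
  rw [List.getElem_map, List.getElem_range]
  refine WSubK.ext (hc.trans rfl) (hw.trans ?_)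
  simp [chainEltK, σ]

lemma isMaxChain'_hatChainOf (hk : 0 < k) (σ : Equiv.Perm (Fin n)) (c : Fin n → Fin k) :
    IsMaxChain' ((⊥ : WSubK n k) : WithTop (WSubK n k)) ⊤ (hatChainOf σ c) :=
  isMaxChain'_coe_top_iff.2 ⟨_, _, isMaxChain'_chainEltK σ c,
    (isMax_iff hk).2 (carrier_chainEltK_self σ c), hatChainOf_eq σ c⟩

lemma isMaxChain'_iff_exists_eq_hatChainOf (hk : 0 < k) {d : List (WithTop (WSubK n k))} :
    IsMaxChain' ((⊥ : WSubK n k) : WithTop (WSubK n k)) ⊤ d ↔ ∃ σ c, d = hatChainOf σ c := by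
  refine ⟨fun hd => ?_, fun ⟨σ, c, hd⟩ => hd ▸ isMaxChain'_hatChainOf hk σ c⟩
  obtain ⟨l, t, hl, ht, rfl⟩ := isMaxChain'_coe_top_iff.1 hd
  obtain ⟨σ, c, rfl⟩ := exists_eq_map_chainEltK hl.1 hl.2.1 (length_eq_of_isMaxChain' hk hl ht)
  exact ⟨σ, c, (hatChainOf_eq σ c).symm⟩

end WSubK

lemma labK_coe_cons {n k : ℕ} (a : WSubK n k) (x : Fin n) (hx : x ∉ a.carrier) (i : Fin k) :
    labK (a : WithTop (WSubK n k)) (a.cons x hx i : WithTop (WSubK n k)) = ((x : ℕ), (i : ℕ)) := by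
  simp [labK, insert_sdiff_cancel hx, ← Multiset.singleton_add]

lemma labelWordK_length {n k : ℕ} (d : List (WithTop (WSubK n k))) :
    (labelWordK d).length = d.length - 1 := by
  simp [labelWordK]

lemma Prod.mk_lt_mk_iff_of_fst_ne {α β : Type*} [PartialOrder α] [Preorder β] {a₁ a₂ : α}
    {b₁ b₂ : β} (h : a₁ ≠ a₂) : (a₁, b₁) < (a₂, b₂) ↔ a₁ < a₂ ∧ b₁ ≤ b₂ := by
  rw [Prod.mk_lt_mk]
  exact ⟨fun h' => h'.elim id fun h'' => ⟨h''.1.lt_of_ne h, h''.2.le⟩, Or.inl⟩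

section ColoredPermutation

variable {n k : ℕ} (σ : Equiv.Perm (Fin n)) (c : Fin n → Fin k)

lemma labelWordK_hatChainOf :
    labelWordK (hatChainOf σ c) =
      List.ofFn (fun p => ((σ p : ℕ), (c (σ p) : ℕ))) ++ [(n, 0)] := by
  have hlen : (hatChainOf σ c).length = n + 2 := by simp [hatChainOf]
  have hget : ∀ j (hj : j < n + 1), (hatChainOf σ c)[j]'(by omega) = chainEltK σ c j := by
    intro j hj
    simp [hatChainOf, List.getElem_append_left, hj]
  apply List.ext_getElem (by simp [labelWordK_length, hlen])
  intro j hj _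
  rw [labelWordK_length, hlen] at hj
  simp only [labelWordK, List.getElem_zipWith, List.getElem_tail]
  rcases Nat.lt_or_ge j n with hjn | hjn
  · rw [hget j (by omega), hget (j + 1) (by omega), chainEltK_succ σ c hjn, labK_coe_cons,
      List.getElem_append_left (by simpa using hjn), List.getElem_ofFn]
  · obtain rfl : j = n := by omega
    rw [hget j (by omega), List.getElem_append_right (by simp)]
    simp [hatChainOf, labK]


lemma isChain_not_lt_ofFn_iff_not_hasAscent :
    (List.ofFn fun p => ((σ p : ℕ), (c (σ p) : ℕ))).IsChain (fun a b => ¬ a < b) ↔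
      ¬ HasAscent σ c := by
  simp only [List.isChain_iff_getElem, List.length_ofFn, List.getElem_ofFn, HasAscent,
    not_exists, not_and, Fin.lt_def, Fin.le_def]
  refine forall_congr' fun i => forall_congr' fun hi => ?_
  rw [Prod.mk_lt_mk_iff_of_fst_ne (Fin.val_injective.ne (σ.injective.ne (by simp))), not_and]

lemma isChain_not_lt_labelWordK_hatChainOf_iff (hn : 0 < n) :
    (labelWordK (hatChainOf σ c)).IsChain (fun a b => ¬ a < b) ↔
      ¬ HasAscent σ c ∧ (c (σ ⟨n - 1, by omega⟩)).val ≠ 0 := by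
  have hlast : (List.ofFn fun p => ((σ p : ℕ), (c (σ p) : ℕ))).getLast? =
      some (((σ ⟨n - 1, by omega⟩ : Fin n) : ℕ), ((c (σ ⟨n - 1, by omega⟩)) : ℕ)) := by
    rw [List.getLast?_eq_some_getLast (by simp; omega), List.getLast_ofFn]
  rw [labelWordK_hatChainOf, List.isChain_append, isChain_not_lt_ofFn_iff_not_hasAscent, hlast]
  simp only [List.isChain_singleton, List.head?_cons, Option.mem_def, Option.some.injEq,
    forall_eq', Prod.mk_lt_mk, (σ _).isLt, true_and, not_lt_zero, and_false, or_false, not_le,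
    Nat.pos_iff_ne_zero]

end ColoredPermutation

lemma hatChainOf_inj {n k : ℕ} {σ σ' : Equiv.Perm (Fin n)} {c c' : Fin n → Fin k} :
    hatChainOf σ c = hatChainOf σ' c' ↔ σ = σ' ∧ c = c' := by
  refine ⟨fun h => ?_, fun h => h.1 ▸ h.2 ▸ rfl⟩
  have h' := List.ofFn_injective (List.append_cancel_right
    ((labelWordK_hatChainOf σ c).symm.trans ((congrArg labelWordK h).trans
      (labelWordK_hatChainOf σ' c'))))
  have hσ : σ = σ' := Equiv.ext fun p => Fin.ext (congrArg Prod.fst (congrFun h' p))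
  subst hσ
  refine ⟨rfl, funext fun x => ?_⟩
  simpa using Fin.ext (congrArg Prod.snd (congrFun h' (σ.symm x)))

theorem ascent_free_chains_of_hat_poset (n k : ℕ) (hn : 1 ≤ n) (hk : 1 ≤ k) :
    (∀ d : List (WithTop (WSubK n k)),
      IsMaxChain' ((⟨∅, 0, by simp⟩ : WSubK n k) : WithTop (WSubK n k)) ⊤ d →
        ((labelWordK d).Chain' (fun a b => ¬ a < b) ↔
          ∃ (σ : Equiv.Perm (Fin n)) (c : Fin n → Fin k),
            ¬ HasAscent σ c ∧ (c (σ ⟨n - 1, by omega⟩)).val ≠ 0 ∧ d = hatChainOf σ c)) ∧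
    Nat.card {d : List (WithTop (WSubK n k)) //
        IsMaxChain' ((⟨∅, 0, by simp⟩ : WSubK n k) : WithTop (WSubK n k)) ⊤ d ∧
          (labelWordK d).Chain' (fun a b => ¬ a < b)} =
      Nat.card {w : Equiv.Perm (Fin n) × (Fin n → Fin k) //
        ¬ HasAscent w.1 w.2 ∧ (w.2 (w.1 ⟨n - 1, by omega⟩)).val ≠ 0} := by
  have hchar : ∀ d : List (WithTop (WSubK n k)),
      IsMaxChain' ((⊥ : WSubK n k) : WithTop (WSubK n k)) ⊤ d →
        ((labelWordK d).IsChain (fun a b => ¬ a < b) ↔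
          ∃ (σ : Equiv.Perm (Fin n)) (c : Fin n → Fin k),
            ¬ HasAscent σ c ∧ (c (σ ⟨n - 1, by omega⟩)).val ≠ 0 ∧ d = hatChainOf σ c) := by
    intro d hd
    obtain ⟨σ, c, rfl⟩ := (WSubK.isMaxChain'_iff_exists_eq_hatChainOf hk).1 hd
    rw [isChain_not_lt_labelWordK_hatChainOf_iff σ c hn]
    refine ⟨fun h => ⟨σ, c, h.1, h.2, rfl⟩, ?_⟩
    rintro ⟨σ', c', hasc, hlast, he⟩
    obtain ⟨rfl, rfl⟩ := hatChainOf_inj.1 he.symm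
    exact ⟨hasc, hlast⟩
  refine ⟨hchar, Eq.symm <| Nat.card_eq_of_bijective
    (fun w => ⟨hatChainOf w.1.1 w.1.2, WSubK.isMaxChain'_hatChainOf hk _ _,
      (hchar _ (WSubK.isMaxChain'_hatChainOf hk _ _)).2 ⟨_, _, w.2.1, w.2.2, rfl⟩⟩) ⟨?_, ?_⟩⟩
  · rintro ⟨⟨σ, c⟩, _⟩ ⟨⟨σ', c'⟩, _⟩ h
    obtain ⟨rfl, rfl⟩ := hatChainOf_inj.1 (congrArg Subtype.val h)
    rfl
  · rintro ⟨d, hd, hasc⟩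
    obtain ⟨σ, c, h, hlast, rfl⟩ := (hchar d hd).1 hasc
    exact ⟨⟨(σ, c), h, hlast⟩, rfl⟩
end
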